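/- Let N be a smooth 1-dimensional manifold without boundary and let γ = (γ₁, γ₂) : N → ℝ² be a smooth immersion satisfying condition (∗). Then for any nonempty open set U₁ × U₂ of N × N there exists (q₁, q₂) ∈ U₁ × U₂ such that both det [ γ′(q₁) , γ(q₂) − γ(q₁) ] ≠ 0 and det [ γ′(q₂) , γ(q₂) − γ(q₁) ] ≠ 0, where γ′(qᵢ) denotes the derivative of γ in a local coordinate around qᵢ and det [u, v] = u₁v₂ − u₂v₁ for u, v ∈ ℝ². -/

import Mathlib

open Manifold

noncomputable section

abbrev E2 := EuclideanSpace ℝ (Fin 2)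
abbrev E1 := EuclideanSpace ℝ (Fin 1)

/-- The distance-squared mapping `D_p : ℝ² → ℝ²` associated to `p = (p₁, p₂)`. -/
def Dp (p₁ p₂ : E2) (x : E2) : E2 :=
  (EuclideanSpace.equiv (Fin 2) ℝ).symm ![‖x - p₁‖ ^ 2, ‖x - p₂‖ ^ 2]

variable {N : Type*} [TopologicalSpace N] [ChartedSpace E1 N]
  [IsManifold (𝓡 1) (⊤ : ℕ∞) N]

/-- The local-coordinate representative of `γ` around `q`, using the preferred chart. -/
def gammaLocal (γ : N → E2) (q : N) : ℝ → E2 :=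
  fun t => γ ((extChartAt (𝓡 1) q).symm (EuclideanSpace.single 0 t))

/-- The local coordinate of the point `q` itself. -/
def coord (q : N) : ℝ := extChartAt (𝓡 1) q q 0

/-- The curvature of `γ` at `q`, computed in the preferred local coordinate around `q`:
`κ(q) = (γ₁′γ₂″ − γ₂′γ₁″) / ((γ₁′)² + (γ₂′)²)^{3/2}`. -/
def curvatureAt (γ : N → E2) (q : N) : ℝ :=
  (deriv (gammaLocal γ q) (coord q) 0 * deriv (deriv (gammaLocal γ q)) (coord q) 1 -
   deriv (gammaLocal γ q) (coord q) 1 * deriv (deriv (gammaLocal γ q)) (coord q) 0) /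
  ((deriv (gammaLocal γ q) (coord q) 0 ^ 2 + deriv (gammaLocal γ q) (coord q) 1 ^ 2) ^ ((3:ℝ)/2))

/-- Condition (∗): on every nonempty open subset of `N` there is a point of nonzero curvature. -/
def SatisfiesStar (γ : N → E2) : Prop :=
  ∀ U : Set N, IsOpen U → U.Nonempty → ∃ q ∈ U, curvatureAt γ q ≠ 0

/-- `det [u, v] = u₁v₂ − u₂v₁` for `u, v ∈ ℝ²`. -/
def det2 (u v : E2) : ℝ := u 0 * v 1 - u 1 * v 0

/-!
Suppose `det [γ′, γ − c]` vanished on an open set `W`. Differentiating this identity (in the chart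
of a point `q ∈ W`; derivatives in different charts differ by a scalar, so the vanishing does not
depend on the chart) gives `det [γ″, γ − c] = 0`, so `γ′ ∥ γ″` wherever `γ ≠ c`, i.e. `κ = 0` there.
Condition (∗) rules this out, and also rules out `γ ≡ c` on `W`. Hence every nonempty open set
contains a point `q` with `det [γ′(q), γ(q) − c] ≠ 0`. Applying this in `U₂` with `c = γ(p₁)` for
some `p₁ ∈ U₁` gives `q₂`; applying it again, with `c = γ(q₂)`, in the open neighbourhood of `p₁`
in `U₁` on which `det [γ′(q₂), γ(q₂) − γ(·)]` does not vanish gives `q₁`.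
-/

open Topology Filter Set

section EuclideanSpaceOne

variable {F : Type*} [NormedAddCommGroup F] [NormedSpace ℝ F]

theorem EuclideanSpace.single_eq_self_fin_one (v : E1) : EuclideanSpace.single 0 (v 0) = v := by
  ext i; fin_cases i; simp

theorem euclideanSpace_single_eq_smul (t : ℝ) :
    EuclideanSpace.single (0 : Fin 1) t = t • EuclideanSpace.single 0 1 := by
  ext i; fin_cases i; simp

theorem ContinuousLinearMap.apply_eq_smul_apply_single (L : E1 →L[ℝ] F) (v : E1) :
    L v = v 0 • L (EuclideanSpace.single 0 1) := by
  rw [← map_smul, ← euclideanSpace_single_eq_smul, EuclideanSpace.single_eq_self_fin_one]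

theorem contDiff_euclideanSpace_single {n : WithTop ℕ∞} :
    ContDiff ℝ n fun s : ℝ ↦ EuclideanSpace.single (0 : Fin 1) s := by
  rw [funext euclideanSpace_single_eq_smul]
  exact contDiff_id.smul contDiff_const

theorem hasDerivAt_euclideanSpace_single (t : ℝ) :
    HasDerivAt (fun s : ℝ ↦ EuclideanSpace.single (0 : Fin 1) s)
      (EuclideanSpace.single 0 1) t := by
  rw [funext euclideanSpace_single_eq_smul]
  simpa using (hasDerivAt_id t).smul_const (EuclideanSpace.single (0 : Fin 1) (1 : ℝ))

end EuclideanSpaceOne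

section ChartCurve

variable {M : Type*} [TopologicalSpace M] [ChartedSpace E1 M]

def chartCurve (q : M) (t : ℝ) : M :=
  (extChartAt (𝓡 1) q).symm (EuclideanSpace.single 0 t)

def chartParams (q : M) : Set ℝ :=
  (fun t ↦ EuclideanSpace.single 0 t) ⁻¹' (extChartAt (𝓡 1) q).target

theorem gammaLocal_eq_comp (γ : M → E2) (q : M) : gammaLocal γ q = γ ∘ chartCurve q := rfl

theorem single_coord (q : M) : EuclideanSpace.single 0 (coord q) = extChartAt (𝓡 1) q q :=
  EuclideanSpace.single_eq_self_fin_one _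

theorem isOpen_chartParams (q : M) : IsOpen (chartParams q) :=
  (isOpen_extChartAt_target q).preimage (contDiff_euclideanSpace_single (n := 0)).continuous

theorem coord_mem_chartParams (q : M) : coord q ∈ chartParams q := by
  simp only [chartParams, mem_preimage, single_coord, mem_extChartAt_target]

theorem chartCurve_coord (q : M) : chartCurve q (coord q) = q := by
  rw [chartCurve, single_coord, extChartAt_to_inv]

theorem continuousOn_chartCurve (q : M) : ContinuousOn (chartCurve q) (chartParams q) :=
  (continuousOn_extChartAt_symm q).comp
    (contDiff_euclideanSpace_single (n := 0)).continuous.continuousOn fun _ ht ↦ ht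

theorem chartCurve_preimage_mem_nhds {q : M} {W : Set M} (hW : W ∈ 𝓝 q) :
    chartCurve q ⁻¹' W ∈ 𝓝 (coord q) := by
  apply ((continuousOn_chartCurve q).continuousAt
    ((isOpen_chartParams q).mem_nhds (coord_mem_chartParams q))).preimage_mem_nhds
  rwa [chartCurve_coord]

end ChartCurve

section ChartCurveDeriv

variable {M : Type*} [TopologicalSpace M] [ChartedSpace E1 M]
  {F : Type*} [NormedAddCommGroup F] [NormedSpace ℝ F]

theorem contDiffOn_comp_chartCurve {n : WithTop ℕ∞} [IsManifold (𝓡 1) n M] {γ : M → F}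
    (hγ : ContMDiff (𝓡 1) 𝓘(ℝ, F) n γ) (q : M) :
    ContDiffOn ℝ n (γ ∘ chartCurve q) (chartParams q) :=
  (hγ.comp_contMDiffOn (contMDiffOn_extChartAt_symm q)).contDiffOn.comp
    contDiff_euclideanSpace_single.contDiffOn fun _ ht ↦ ht

variable [IsManifold (𝓡 1) 1 M]

theorem mdifferentiableAt_extChartAt_symm {q : M} {y : E1}
    (hy : y ∈ (extChartAt (𝓡 1) q).target) :
    MDifferentiableAt 𝓘(ℝ, E1) (𝓡 1) (extChartAt (𝓡 1) q).symm y := by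
  have h := mdifferentiableWithinAt_extChartAt_symm (I := 𝓡 1) hy
  rwa [ModelWithCorners.range_eq_univ, mdifferentiableWithinAt_univ] at h

theorem mdifferentiableAt_chartCurve {q : M} {t : ℝ} (ht : t ∈ chartParams q) :
    MDifferentiableAt 𝓘(ℝ) (𝓡 1) (chartCurve q) t :=
  (mdifferentiableAt_extChartAt_symm ht).comp t
    (hasDerivAt_euclideanSpace_single t).differentiableAt.mdifferentiableAt

theorem deriv_comp_chartCurve {γ : M → F} {q : M} {t : ℝ}
    (hγ : MDifferentiableAt (𝓡 1) 𝓘(ℝ, F) γ (chartCurve q t)) (ht : t ∈ chartParams q) :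
    deriv (γ ∘ chartCurve q) t =
      mfderiv (𝓡 1) 𝓘(ℝ, F) γ (chartCurve q t) (mfderiv 𝓘(ℝ) (𝓡 1) (chartCurve q) t 1) := by
  rw [← mfderiv_comp_apply t hγ (mdifferentiableAt_chartCurve ht), mfderiv_eq_fderiv]
  exact fderiv_apply_one_eq_deriv.symm

theorem mfderiv_chartCurve_coord (q : M) :
    mfderiv 𝓘(ℝ) (𝓡 1) (chartCurve q) (coord q) 1 = EuclideanSpace.single 0 1 := by
  have h := mfderivWithin_range_extChartAt_symm (I := 𝓡 1) (x := q)
  rw [ModelWithCorners.range_eq_univ, mfderivWithin_univ, ← single_coord] at h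
  have hsingle := hasDerivAt_euclideanSpace_single (coord q)
  rw [show chartCurve q = (extChartAt (𝓡 1) q).symm ∘ fun s ↦ EuclideanSpace.single 0 s from rfl,
    mfderiv_comp_apply _ _ hsingle.differentiableAt.mdifferentiableAt, h, mfderiv_eq_fderiv]
  · rw [hsingle.hasFDerivAt.fderiv]
    exact one_smul ℝ _
  · exact mdifferentiableAt_extChartAt_symm (single_coord q ▸ mem_extChartAt_target q)

theorem deriv_comp_chartCurve_coord {γ : M → F} {q : M}
    (hγ : MDifferentiableAt (𝓡 1) 𝓘(ℝ, F) γ q) :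
    deriv (γ ∘ chartCurve q) (coord q) =
      mfderiv (𝓡 1) 𝓘(ℝ, F) γ q (EuclideanSpace.single 0 1) := by
  have h := chartCurve_coord q
  rw [deriv_comp_chartCurve (by rwa [h]) (coord_mem_chartParams q), mfderiv_chartCurve_coord, h]

theorem exists_deriv_comp_chartCurve_eq_smul {γ : M → F}
    (hγ : MDifferentiable (𝓡 1) 𝓘(ℝ, F) γ) {q : M} {t : ℝ} (ht : t ∈ chartParams q) :
    ∃ a : ℝ, deriv (γ ∘ chartCurve q) t =
      a • deriv (γ ∘ chartCurve (chartCurve q t)) (coord (chartCurve q t)) := by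
  rw [deriv_comp_chartCurve (hγ _) ht, deriv_comp_chartCurve_coord (hγ _)]
  exact ⟨_, ContinuousLinearMap.apply_eq_smul_apply_single _ _⟩

end ChartCurveDeriv

section Det2

theorem det2_smul_left (a : ℝ) (u v : E2) : det2 (a • u) v = a * det2 u v := by
  simp only [det2, PiLp.smul_apply, smul_eq_mul]; ring

theorem det2_zero_left (v : E2) : det2 0 v = 0 := by
  simp [det2]

theorem det2_self (u : E2) : det2 u u = 0 := by
  simp only [det2]; ring

theorem det2_sub_comm (u a b : E2) : det2 u (a - b) = -det2 u (b - a) := by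
  simp only [det2, PiLp.sub_apply]; ring

theorem det2_eq_zero_of_det2_eq_zero {u w v : E2} (hv : v ≠ 0) (hu : det2 u v = 0)
    (hw : det2 w v = 0) : det2 u w = 0 := by
  have h0 : det2 u w * v 0 = 0 := by unfold det2 at *; linear_combination w 0 * hu - u 0 * hw
  have h1 : det2 u w * v 1 = 0 := by unfold det2 at *; linear_combination w 1 * hu - u 1 * hw
  by_contra h
  refine hv ?_
  ext i
  fin_cases i
  · exact (mul_eq_zero.1 h0).resolve_left h
  · exact (mul_eq_zero.1 h1).resolve_left h

theorem continuous_det2_right (u : E2) : Continuous (det2 u) := by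
  unfold det2; fun_prop

theorem HasDerivAt.det2 {u v : ℝ → E2} {u' v' : E2} {t : ℝ} (hu : HasDerivAt u u' t)
    (hv : HasDerivAt v v' t) :
    HasDerivAt (fun s ↦ _root_.det2 (u s) (v s))
      (_root_.det2 u' (v t) + _root_.det2 (u t) v') t := by
  have hc (i : Fin 2) {w : ℝ → E2} {w' : E2} (hw : HasDerivAt w w' t) :
      HasDerivAt (fun s ↦ w s i) (w' i) t :=
    (EuclideanSpace.proj (𝕜 := ℝ) i).hasFDerivAt.comp_hasDerivAt t hw
  refine (((hc 0 hu).mul (hc 1 hv)).sub ((hc 1 hu).mul (hc 0 hv))).congr_deriv ?_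
  simp only [_root_.det2]; ring

theorem det2_deriv_deriv_eq_zero {g : ℝ → E2} {c : E2} {t₀ : ℝ} (hg : DifferentiableAt ℝ g t₀)
    (hg' : DifferentiableAt ℝ (deriv g) t₀) (hc : g t₀ ≠ c)
    (h : ∀ᶠ t in 𝓝 t₀, det2 (deriv g t) (g t - c) = 0) :
    det2 (deriv g t₀) (deriv (deriv g) t₀) = 0 := by
  have hf := hg'.hasDerivAt.det2 (hg.hasDerivAt.sub_const c)
  rw [det2_self, add_zero] at hf
  have h₂ : det2 (deriv (deriv g) t₀) (g t₀ - c) = 0 := by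
    rw [← hf.deriv, Filter.EventuallyEq.deriv_eq h, deriv_const]
  exact det2_eq_zero_of_det2_eq_zero (sub_ne_zero.2 hc) h.self_of_nhds h₂

end Det2

section Curvature

variable {M : Type*} [TopologicalSpace M] [ChartedSpace E1 M] {γ : M → E2}

theorem curvatureAt_eq_zero_of_det2_eq_zero {q : M}
    (h : det2 (deriv (gammaLocal γ q) (coord q)) (deriv (deriv (gammaLocal γ q)) (coord q)) = 0) :
    curvatureAt γ q = 0 := by
  rw [curvatureAt, ← det2, h, zero_div]

theorem SatisfiesStar.exists_ne (hstar : SatisfiesStar γ) {W : Set M} (hW : IsOpen W)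
    (hne : W.Nonempty) (c : E2) : ∃ q ∈ W, γ q ≠ c := by
  by_contra! h
  obtain ⟨q, hqW, hκ⟩ := hstar W hW hne
  have hconst : gammaLocal γ q =ᶠ[𝓝 (coord q)] fun _ ↦ c :=
    Filter.mem_of_superset (chartCurve_preimage_mem_nhds (hW.mem_nhds hqW)) fun t ht ↦ h _ ht
  refine hκ (curvatureAt_eq_zero_of_det2_eq_zero ?_)
  rw [hconst.deriv_eq, deriv_const, det2_zero_left]

variable [IsManifold (𝓡 1) 2 M]

theorem curvatureAt_eq_zero_of_forall_det2_eq_zero (hγ : ContMDiff (𝓡 1) 𝓘(ℝ, E2) 2 γ)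
    {W : Set M} {q : M} (hW : W ∈ 𝓝 q) {c : E2} (hc : γ q ≠ c)
    (h : ∀ p ∈ W, det2 (deriv (gammaLocal γ p) (coord p)) (γ p - c) = 0) :
    curvatureAt γ q = 0 := by
  have hparams := (isOpen_chartParams q).mem_nhds (coord_mem_chartParams q)
  have hg : ContDiffAt ℝ 2 (gammaLocal γ q) (coord q) :=
    (contDiffOn_comp_chartCurve hγ q).contDiffAt hparams
  apply curvatureAt_eq_zero_of_det2_eq_zero
  refine det2_deriv_deriv_eq_zero (hg.differentiableAt (by norm_num))
    ((hg.derivWithin (m := 1) (by norm_num)).differentiableAt (by norm_num))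
    (by rwa [gammaLocal_eq_comp, Function.comp_apply, chartCurve_coord]) ?_
  filter_upwards [hparams, chartCurve_preimage_mem_nhds hW] with t ht htW
  obtain ⟨a, ha⟩ := exists_deriv_comp_chartCurve_eq_smul (hγ.mdifferentiable (by norm_num)) ht
  rw [gammaLocal_eq_comp, ha, det2_smul_left]
  exact mul_eq_zero_of_right a (h _ htW)

theorem exists_det2_deriv_gammaLocal_ne_zero (hγ : ContMDiff (𝓡 1) 𝓘(ℝ, E2) 2 γ)
    (hstar : SatisfiesStar γ) {W : Set M} (hW : IsOpen W) (hne : W.Nonempty) (c : E2) :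
    ∃ q ∈ W, det2 (deriv (gammaLocal γ q) (coord q)) (γ q - c) ≠ 0 := by
  by_contra! h
  obtain ⟨q₀, hq₀W, hq₀c⟩ := hstar.exists_ne hW hne c
  obtain ⟨q, ⟨hqW, hqc⟩, hκ⟩ := hstar (W ∩ γ ⁻¹' {c}ᶜ)
    (hW.inter (isOpen_compl_singleton.preimage hγ.continuous)) ⟨q₀, hq₀W, hq₀c⟩
  exact hκ (curvatureAt_eq_zero_of_forall_det2_eq_zero hγ (hW.mem_nhds hqW) hqc h)

end Curvature

theorem stmt9_general (γ : N → E2)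
    (hsmooth : ContMDiff (𝓡 1) 𝓘(ℝ, E2) (⊤ : ℕ∞) γ)
    (hstar : SatisfiesStar γ)
    (U₁ U₂ : Set N) (hU₁ : IsOpen U₁) (hU₂ : IsOpen U₂)
    (hne₁ : U₁.Nonempty) (hne₂ : U₂.Nonempty) :
    ∃ q₁ ∈ U₁, ∃ q₂ ∈ U₂,
      det2 (deriv (gammaLocal γ q₁) (coord q₁)) (γ q₂ - γ q₁) ≠ 0 ∧
      det2 (deriv (gammaLocal γ q₂) (coord q₂)) (γ q₂ - γ q₁) ≠ 0 := by
  have hγ : ContMDiff (𝓡 1) 𝓘(ℝ, E2) 2 γ := hsmooth.of_le (by norm_cast)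
  obtain ⟨p₁, hp₁⟩ := hne₁
  obtain ⟨q₂, hq₂, hdet₂⟩ := exists_det2_deriv_gammaLocal_ne_zero hγ hstar hU₂ hne₂ (γ p₁)
  let V := U₁ ∩ {q | det2 (deriv (gammaLocal γ q₂) (coord q₂)) (γ q₂ - γ q) ≠ 0}
  have hV : IsOpen V := hU₁.inter <| isOpen_ne_fun
    ((continuous_det2_right _).comp (continuous_const.sub hγ.continuous)) continuous_const
  obtain ⟨q₁, ⟨hq₁, hdet₂'⟩, hdet₁⟩ :=
    exists_det2_deriv_gammaLocal_ne_zero hγ hstar hV ⟨p₁, hp₁, hdet₂⟩ (γ q₂)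
  exact ⟨q₁, hq₁, q₂, hq₂, by rwa [det2_sub_comm, neg_ne_zero], hdet₂'⟩

theorem stmt9 (γ : N → E2)
    (hsmooth : ContMDiff (𝓡 1) 𝓘(ℝ, E2) (⊤ : ℕ∞) γ)
    (himm : ∀ q : N, Function.Injective (mfderiv (𝓡 1) 𝓘(ℝ, E2) γ q))
    (hstar : SatisfiesStar γ)
    (U₁ U₂ : Set N) (hU₁ : IsOpen U₁) (hU₂ : IsOpen U₂)
    (hne₁ : U₁.Nonempty) (hne₂ : U₂.Nonempty) :
    ∃ q₁ ∈ U₁, ∃ q₂ ∈ U₂,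
      det2 (deriv (gammaLocal γ q₁) (coord q₁)) (γ q₂ - γ q₁) ≠ 0 ∧
      det2 (deriv (gammaLocal γ q₂) (coord q₂)) (γ q₂ - γ q₁) ≠ 0 :=
  stmt9_general γ hsmooth hstar U₁ U₂ hU₁ hU₂ hne₁ hne₂
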